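/- If Γ_E(R) has at least 3 vertices, then any vertex adjacent to a leaf is an associated prime maximal in F = {ann(z) : 0 ≠ z ∈ R}. -/

import Mathlib

open scoped Classical

noncomputable section

/-- The annihilator ideal of an element `x` of a commutative ring `R`. -/
def ann (R : Type*) [CommRing R] (x : R) : Ideal R := Ideal.torsionOf R R x

/-- The type of nonzero zero divisors of `R`. -/
def ZD (R : Type*) [CommRing R] : Type _ :=
  {x : R // x ≠ 0 ∧ ∃ y : R, y ≠ 0 ∧ x * y = 0}

/-- Two zero divisors are equivalent iff they have the same annihilator. -/
instance annSetoid (R : Type*) [CommRing R] : Setoid (ZD R) :=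
  ⟨fun a b => ann R a.1 = ann R b.1,
   fun _ => rfl, Eq.symm, Eq.trans⟩

/-- The vertex set of `Γ_E(R)`: equivalence classes of nonzero zero divisors. -/
def GammaEV (R : Type*) [CommRing R] : Type _ := Quotient (annSetoid R)

/-- The class of a nonzero zero divisor. -/
def cls (R : Type*) [CommRing R] (a : ZD R) : GammaEV R :=
  Quotient.mk (annSetoid R) a

/-- The graph `Γ_E(R)` of equivalence classes of zero divisors. -/
def gammaE (R : Type*) [CommRing R] : SimpleGraph (GammaEV R) where
  Adj u v := u ≠ v ∧ ∃ a b : ZD R, cls R a = u ∧ cls R b = v ∧ a.1 * b.1 = 0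
  symm := by
    constructor
    rintro u v ⟨huv, a, b, ha, hb, hab⟩
    exact ⟨huv.symm, b, a, hb, ha, by rwa [mul_comm] at hab⟩
  loopless := by constructor; rintro u ⟨h, -⟩; exact h rfl

/-- `I` is a maximal element of the family `F = {ann x : 0 ≠ x ∈ R}`. -/
def MaxAnn (R : Type*) [CommRing R] (I : Ideal R) : Prop :=
  (∃ x : R, x ≠ 0 ∧ I = ann R x) ∧
    ∀ y : R, y ≠ 0 → I ≤ ann R y → I = ann R y

/-!
Write the leaf as the class of `a`. Every nonzero `z` with `a * z = 0` is a neighbour of the leaf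
or the leaf's own class, so `ann z` is `ann a` or `ann b`. Noetherianity gives `y` with `ann y`
maximal in `F` above `ann b`, and maximal members of `F` are prime. As `a ∈ ann b ≤ ann y`, the
ideal `ann y` is `ann a` or `ann b`. If it were `ann a`, take any zero divisor `c` with `c * d = 0`,
`d ≠ 0`: if `c ∉ ann a`, primality forces `a * d = 0`, so `c ∈ ann d ≤ ann a` anyway. Then every
vertex is the class of `a` or of `b`, contradicting the three vertices. Hence `ann y = ann b`.
-/

section

variable {R : Type*} [CommRing R]

lemma mem_ann_iff {r x : R} : r ∈ ann R x ↔ r * x = 0 := by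
  simp [ann, Ideal.mem_torsionOf_iff, smul_eq_mul]

lemma cls_eq_cls_iff {a b : ZD R} : cls R a = cls R b ↔ ann R a.1 = ann R b.1 :=
  Quotient.eq

lemma ann_le_ann_mul (s x : R) : ann R x ≤ ann R (s * x) := fun t ht => by
  rw [mem_ann_iff] at ht ⊢
  rw [mul_left_comm, ht, mul_zero]

lemma mul_eq_zero_of_ann_eq {a a' b b' : R} (ha : ann R a = ann R a') (hb : ann R b = ann R b')
    (h : a * b = 0) : a' * b' = 0 := by
  have hab' : a ∈ ann R b' := hb ▸ mem_ann_iff.2 h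
  have hb'a : b' * a = 0 := by rw [mul_comm]; exact mem_ann_iff.1 hab'
  have hb'a' : b' ∈ ann R a' := ha ▸ mem_ann_iff.2 hb'a
  rw [mul_comm]
  exact mem_ann_iff.1 hb'a'

lemma MaxAnn.isPrime {I : Ideal R} (h : MaxAnn R I) : I.IsPrime := by
  obtain ⟨⟨x, hx0, rfl⟩, hmax⟩ := h
  refine ⟨fun htop => hx0 ?_, fun {r s} hrs => or_iff_not_imp_right.2 fun hs => ?_⟩
  · simpa [mem_ann_iff] using (htop ▸ Submodule.mem_top : (1 : R) ∈ ann R x)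
  · have hsx : s * x ≠ 0 := fun h => hs (mem_ann_iff.2 h)
    rw [hmax (s * x) hsx (ann_le_ann_mul s x), mem_ann_iff, ← mul_assoc]
    exact mem_ann_iff.1 hrs

lemma exists_maxAnn_le [IsNoetherianRing R] {x : R} (hx : x ≠ 0) :
    ∃ y : R, y ≠ 0 ∧ ann R x ≤ ann R y ∧ MaxAnn R (ann R y) := by
  obtain ⟨_, ⟨y, hy0, rfl, hxy⟩, hmax⟩ :=
    set_has_maximal_iff_noetherian.2 (inferInstance : IsNoetherianRing R)
      {I : Ideal R | ∃ z : R, z ≠ 0 ∧ I = ann R z ∧ ann R x ≤ I} ⟨ann R x, x, hx, rfl, le_rfl⟩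
  refine ⟨y, hy0, hxy, ⟨y, hy0, rfl⟩, fun z hz hle => ?_⟩
  exact hle.eq_of_not_lt (hmax _ ⟨z, hz, rfl, hxy.trans hle⟩)

lemma gammaE_adj_cls_iff {a b : ZD R} :
    (gammaE R).Adj (cls R a) (cls R b) ↔ cls R a ≠ cls R b ∧ a.1 * b.1 = 0 := by
  refine ⟨fun ⟨hne, a', b', ha', hb', h⟩ => ⟨hne, ?_⟩, fun ⟨hne, h⟩ => ⟨hne, a, b, rfl, rfl, h⟩⟩
  exact mul_eq_zero_of_ann_eq (cls_eq_cls_iff.1 ha') (cls_eq_cls_iff.1 hb') h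

variable {a b : ZD R}

lemma mul_eq_zero_of_neighborSet_eq (hleaf : (gammaE R).neighborSet (cls R a) = {cls R b}) :
    a.1 * b.1 = 0 := by
  have hb : cls R b ∈ (gammaE R).neighborSet (cls R a) := hleaf ▸ rfl
  exact (gammaE_adj_cls_iff.1 hb).2

lemma ann_eq_or_ann_eq_of_neighborSet_eq (hleaf : (gammaE R).neighborSet (cls R a) = {cls R b})
    {z : R} (hz : z ≠ 0) (haz : a.1 * z = 0) :
    ann R z = ann R a.1 ∨ ann R z = ann R b.1 := by
  let Z : ZD R := ⟨z, hz, a.1, a.2.1, by rw [mul_comm]; exact haz⟩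
  by_cases hZa : cls R Z = cls R a
  · exact Or.inl (cls_eq_cls_iff.1 hZa)
  · have hZ : cls R Z ∈ (gammaE R).neighborSet (cls R a) :=
      gammaE_adj_cls_iff.2 ⟨Ne.symm hZa, haz⟩
    rw [hleaf] at hZ
    exact Or.inr (cls_eq_cls_iff.1 hZ)

lemma mul_eq_zero_of_neighborSet_eq_of_isPrime
    (hleaf : (gammaE R).neighborSet (cls R a) = {cls R b}) (hba : ann R b.1 ≤ ann R a.1)
    (hprime : (ann R a.1).IsPrime) (c : ZD R) : a.1 * c.1 = 0 := by
  obtain ⟨d, hd0, hcd⟩ := c.2.2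
  by_contra hac
  have hca : c.1 ∉ ann R a.1 := fun h => hac (by rw [mul_comm]; exact mem_ann_iff.1 h)
  have hda : d ∈ ann R a.1 :=
    (hprime.mem_or_mem (mem_ann_iff.2 (by rw [hcd, zero_mul]))).resolve_left hca
  have hdle : ann R d ≤ ann R a.1 := by
    have had : a.1 * d = 0 := by rw [mul_comm]; exact mem_ann_iff.1 hda
    rcases ann_eq_or_ann_eq_of_neighborSet_eq hleaf hd0 had with h | h
    · exact h.le
    · exact h.trans_le hba
  exact hca (hdle (mem_ann_iff.2 hcd))

lemma encard_univ_le_two_of_neighborSet_eq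
    (hleaf : (gammaE R).neighborSet (cls R a) = {cls R b}) (hba : ann R b.1 ≤ ann R a.1)
    (hprime : (ann R a.1).IsPrime) :
    (Set.univ : Set (GammaEV R)).encard ≤ 2 := by
  have hsub : (Set.univ : Set (GammaEV R)) ⊆ {cls R a, cls R b} := by
    rintro ⟨c⟩ -
    have hac := mul_eq_zero_of_neighborSet_eq_of_isPrime hleaf hba hprime c
    rcases ann_eq_or_ann_eq_of_neighborSet_eq hleaf c.2.1 hac with h | h
    · exact Or.inl (cls_eq_cls_iff.2 h)
    · exact Or.inr (cls_eq_cls_iff.2 h)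
  calc (Set.univ : Set (GammaEV R)).encard ≤ ({cls R a, cls R b} : Set (GammaEV R)).encard :=
        Set.encard_le_encard hsub
    _ ≤ 2 := by
        refine (Set.encard_insert_le _ _).trans ?_
        rw [Set.encard_singleton, one_add_one_eq_two]

end

theorem stmt17 (R : Type*) [CommRing R] [IsNoetherianRing R]
    (hcard : 3 ≤ (Set.univ : Set (GammaEV R)).encard)
    (b : ZD R) (u : GammaEV R)
    (hleaf : (gammaE R).neighborSet u = {cls R b}) :
    MaxAnn R (ann R b.1) ∧ (ann R b.1).IsPrime := by
  obtain ⟨a, rfl⟩ := Quotient.exists_rep u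
  change (gammaE R).neighborSet (cls R a) = {cls R b} at hleaf
  obtain ⟨y, hy0, hby, hmax⟩ := exists_maxAnn_le b.2.1
  have hay : a.1 * y = 0 :=
    mem_ann_iff.1 (hby (mem_ann_iff.2 (mul_eq_zero_of_neighborSet_eq hleaf)))
  rcases ann_eq_or_ann_eq_of_neighborSet_eq hleaf hy0 hay with hya | hyb
  · rw [hya] at hby hmax
    have := hcard.trans (encard_univ_le_two_of_neighborSet_eq hleaf hby hmax.isPrime)
    norm_num at this
  · rw [← hyb]
    exact ⟨hmax, hmax.isPrime⟩
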